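/- arXiv:1305.2633 — 6 statements merged into one kernel-verified Lean document; each statement's English description precedes it below -/
import Mathlib

section
/- Let γ, k, c be real numbers. Define U₀ : ℝ × ℝ → ℝ by U₀(t,x) = c·x², and recursively U_{n+1}(t,x) = U_n(t,x) − ∫₀ᵗ ( ∂U_n/∂s(s,x) + (γ/2)·x²·∂²U_n/∂x²(s,x) − k ) ds. Then for every n ≥ 0 and all t,x ∈ ℝ, U_n(t,x) = c·x²·( Σ_{j=0}^{n} (−γ·t)^j / j! ) + k·t holds for n ≥ 1, and U₀(t,x) = c·x². -/
/-!
Every iterate has the form `U(t,x) = x² f(t) + k₀ t` with `f` smooth. For such a function the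
integrand of the correction is `x²(f' + γf) + k₀ − k`, and the fundamental theorem of calculus
collapses the step to `U_{n+1}(t,x) = x²(f(0) − γ∫₀ᵗ f) + kt`: a Picard step for `f' = −γf`.
Picard iteration from `f = c` produces `c` times the Taylor partial sums of `exp(−γt)`.
-/

open intervalIntegral

open MeasureTheory (volume)

noncomputable def expPartialSum (a : ℝ) (n : ℕ) (t : ℝ) : ℝ :=
  ∑ j ∈ Finset.range (n + 1), (a * t) ^ j / (j.factorial : ℝ)

noncomputable def vimCorrection (γ k : ℝ) (V : ℝ → ℝ → ℝ) (t x : ℝ) : ℝ :=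
  V t x - ∫ s in (0 : ℝ)..t,
    (deriv (fun s' : ℝ => V s' x) s + (γ / 2) * x ^ 2 * deriv (deriv (fun z : ℝ => V s z)) x - k)

section expPartialSum

variable (a : ℝ)

theorem expPartialSum_zero_right (n : ℕ) : expPartialSum a n 0 = 1 := by
  simp [expPartialSum, Finset.sum_range_succ']

theorem contDiff_expPartialSum (n : ℕ) : ContDiff ℝ 1 (expPartialSum a n) := by
  unfold expPartialSum
  fun_prop

theorem hasDerivAt_expPartialSum_succ (n : ℕ) (t : ℝ) :
    HasDerivAt (expPartialSum a (n + 1)) (a * expPartialSum a n t) t := by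
  have hterm (j : ℕ) : HasDerivAt (fun t => (a * t) ^ (j + 1) / ((j + 1).factorial : ℝ))
      (a * ((a * t) ^ j / (j.factorial : ℝ))) t := by
    refine ((((hasDerivAt_id t).const_mul a).pow (j + 1)).div_const _).congr_deriv ?_
    rw [Nat.factorial_succ]
    push_cast
    field_simp
    simp
  have hsplit : expPartialSum a (n + 1)
      = fun t => 1 + ∑ j ∈ Finset.range (n + 1), (a * t) ^ (j + 1) / ((j + 1).factorial : ℝ) := by
    ext s
    rw [expPartialSum, Finset.sum_range_succ', add_comm]
    simp
  rw [hsplit]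
  refine ((HasDerivAt.fun_sum fun j _ => hterm j).const_add 1).congr_deriv ?_
  simp [expPartialSum, Finset.mul_sum]

theorem mul_integral_expPartialSum (n : ℕ) (t : ℝ) :
    a * ∫ s in (0 : ℝ)..t, expPartialSum a n s = expPartialSum a (n + 1) t - 1 := by
  rw [← integral_const_mul, integral_eq_sub_of_hasDerivAt
    (fun s _ => hasDerivAt_expPartialSum_succ a n s), expPartialSum_zero_right]
  exact ((contDiff_expPartialSum a n).continuous.const_mul a).intervalIntegrable _ _

end expPartialSum

theorem vimCorrection_of_eq_sq_mul_add (γ k k₀ : ℝ) {f : ℝ → ℝ} (hf : ContDiff ℝ 1 f)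
    {V : ℝ → ℝ → ℝ} (hV : ∀ s z, V s z = z ^ 2 * f s + k₀ * s) (t x : ℝ) :
    vimCorrection γ k V t x = x ^ 2 * (f 0 - γ * ∫ s in (0 : ℝ)..t, f s) + k * t := by
  obtain rfl : V = fun s z => z ^ 2 * f s + k₀ * s := funext₂ hV
  have hdiff : Differentiable ℝ f := hf.differentiable one_ne_zero
  have hderiv_t (s : ℝ) :
      deriv (fun s' => x ^ 2 * f s' + k₀ * s') s = x ^ 2 * deriv f s + k₀ := by
    simpa using (((hdiff s).hasDerivAt.const_mul (x ^ 2)).fun_add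
      ((hasDerivAt_id s).const_mul k₀)).deriv
  have hderiv_x (s : ℝ) : deriv (deriv fun z : ℝ => z ^ 2 * f s + k₀ * s) x = 2 * f s := by
    simp
  have hint' : IntervalIntegrable (deriv f) volume 0 t :=
    (hf.continuous_deriv le_rfl).intervalIntegrable _ _
  have hint : IntervalIntegrable f volume 0 t := hdiff.continuous.intervalIntegrable _ _
  have hftc : ∫ s in (0 : ℝ)..t, deriv f s = f t - f 0 :=
    integral_deriv_eq_sub (fun s _ => hdiff s) hint'
  unfold vimCorrection
  simp only [hderiv_t, hderiv_x]
  have hintegrand : (fun s => x ^ 2 * deriv f s + k₀ + γ / 2 * x ^ 2 * (2 * f s) - k)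
      = fun s => x ^ 2 * (deriv f s + γ * f s) + (k₀ - k) := by
    ext s; ring
  rw [hintegrand,
    integral_add ((hint'.add (hint.const_mul γ)).const_mul _) intervalIntegrable_const,
    integral_const_mul, integral_add hint' (hint.const_mul γ), integral_const_mul, hftc,
    integral_const, smul_eq_mul]
  ring

theorem vimCorrection_of_eq_expPartialSum (γ k k₀ c : ℝ) (n : ℕ) {V : ℝ → ℝ → ℝ}
    (hV : ∀ s z, V s z = z ^ 2 * (c * expPartialSum (-γ) n s) + k₀ * s) (t x : ℝ) :
    vimCorrection γ k V t x = c * x ^ 2 * expPartialSum (-γ) (n + 1) t + k * t := by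
  have hf : ContDiff ℝ 1 fun s => c * expPartialSum (-γ) n s :=
    contDiff_const.mul (contDiff_expPartialSum (-γ) n)
  rw [vimCorrection_of_eq_sq_mul_add γ k k₀ hf hV,
    integral_const_mul, expPartialSum_zero_right]
  linear_combination c * x ^ 2 * mul_integral_expPartialSum (-γ) n t

/-- Closed form of the VIM iterates for the one-dimensional heat-like equation
`U_t + (γ/2)·x²·U_xx = k` with initial approximation `U₀(t,x) = c·x²`,
where the recursion is
`U_{n+1}(t,x) = U_n(t,x) − ∫₀ᵗ (∂U_n/∂s(s,x) + (γ/2)·x²·∂²U_n/∂x²(s,x) − k) ds`. -/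
theorem stmt1 (γ k c : ℝ) (U : ℕ → ℝ → ℝ → ℝ)
    (h0 : ∀ t x : ℝ, U 0 t x = c * x ^ 2)
    (hrec : ∀ n : ℕ, ∀ t x : ℝ,
      U (n + 1) t x = U n t x -
        ∫ s in (0 : ℝ)..t,
          (deriv (fun s' : ℝ => U n s' x) s
            + (γ / 2) * x ^ 2 * deriv (deriv (fun z : ℝ => U n s z)) x - k)) :
    (∀ n : ℕ, 1 ≤ n → ∀ t x : ℝ,
      U n t x =
        c * x ^ 2 * (∑ j ∈ Finset.range (n + 1), (-γ * t) ^ j / (j.factorial : ℝ))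
          + k * t)
    ∧ (∀ t x : ℝ, U 0 t x = c * x ^ 2) := by
  refine ⟨fun n hn => ?_, h0⟩
  obtain ⟨m, rfl⟩ := Nat.exists_eq_add_of_le' hn
  induction m with
  | zero =>
    refine fun t x => (hrec 0 t x).trans (vimCorrection_of_eq_expPartialSum γ k 0 c 0 ?_ t x)
    intro s z
    simp [h0, expPartialSum, mul_comm]
  | succ m ih =>
    refine fun t x => (hrec _ t x).trans (vimCorrection_of_eq_expPartialSum γ k k c _ ?_ t x)
    intro s z
    rw [ih (by omega) s z, expPartialSum]
    ring
end

section
/- Let λ > 0 and let k₁, k₂, c₁, c₂, γ₁, γ₂ : [0,1] → ℝ be differentiable with k₁′(α) = c₁′(α) = γ₁′(α) = λ and k₂′(α) = c₂′(α) = γ₂′(α) = −λ for all α ∈ [0,1]. Define u₁(t,x,α) = c₁(α)·x²·exp(−γ₁(α)·t) + k₁(α)·t and u₂(t,x,α) = c₂(α)·x²·exp(−γ₂(α)·t) + k₂(α)·t. Fix t > 0 and x > 0, and suppose 0 < c₁(α) ≤ c₂(α) and 1 − c₂(α)·t > 0 for all α ∈ [0,1]. Then for every α ∈ [0,1], ∂u₁/∂α(t,x,α)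 > 0 and ∂u₂/∂α(t,x,α) < 0. -/
/-!
Since `c`, `γ` and `k` of each endpoint move with the common slope `±λ`, the chain rule gives
`∂u/∂α = ±λ (x² e^{-γ t} (1 - c t) + t)`, and the bracket is positive because `1 - c t > 0`
(for `c₁` this follows from `c₁ ≤ c₂`).
-/

open Real

lemma hasDerivAt_endpoint {c γ k : ℝ → ℝ} {d t x α : ℝ}
    (hc : HasDerivAt c d α) (hγ : HasDerivAt γ d α) (hk : HasDerivAt k d α) :
    HasDerivAt (fun a => c a * x ^ 2 * exp (-γ a * t) + k a * t)
      (d * (x ^ 2 * exp (-γ α * t) * (1 - c α * t) + t)) α := by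
  have hexp : HasDerivAt (fun a => exp (-γ a * t)) (exp (-γ α * t) * (-d * t)) α :=
    (hasDerivAt_exp _).comp α (hγ.neg.mul_const t)
  refine (((hc.mul_const (x ^ 2)).mul hexp).add (hk.mul_const t)).congr_deriv ?_
  ring

lemma endpoint_rate_pos {c γ t : ℝ} (x : ℝ) (ht : 0 < t) (hct : 0 < 1 - c * t) :
    0 < x ^ 2 * exp (-γ * t) * (1 - c * t) + t :=
  add_pos_of_nonneg_of_pos (mul_nonneg (by positivity) hct.le) ht

theorem stmt3_general (lam : ℝ) (hlam : 0 < lam)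
    (k₁ k₂ c₁ c₂ γ₁ γ₂ : ℝ → ℝ)
    (hk₁ : ∀ α ∈ Set.Icc (0 : ℝ) 1, HasDerivAt k₁ lam α)
    (hc₁ : ∀ α ∈ Set.Icc (0 : ℝ) 1, HasDerivAt c₁ lam α)
    (hγ₁ : ∀ α ∈ Set.Icc (0 : ℝ) 1, HasDerivAt γ₁ lam α)
    (hk₂ : ∀ α ∈ Set.Icc (0 : ℝ) 1, HasDerivAt k₂ (-lam) α)
    (hc₂ : ∀ α ∈ Set.Icc (0 : ℝ) 1, HasDerivAt c₂ (-lam) α)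
    (hγ₂ : ∀ α ∈ Set.Icc (0 : ℝ) 1, HasDerivAt γ₂ (-lam) α)
    (u₁ u₂ : ℝ → ℝ → ℝ → ℝ)
    (hu₁ : ∀ t x α : ℝ, u₁ t x α = c₁ α * x ^ 2 * Real.exp (-γ₁ α * t) + k₁ α * t)
    (hu₂ : ∀ t x α : ℝ, u₂ t x α = c₂ α * x ^ 2 * Real.exp (-γ₂ α * t) + k₂ α * t)
    (t x : ℝ) (ht : 0 < t)
    (hc : ∀ α ∈ Set.Icc (0 : ℝ) 1, 0 < c₁ α ∧ c₁ α ≤ c₂ α)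
    (hct : ∀ α ∈ Set.Icc (0 : ℝ) 1, 0 < 1 - c₂ α * t) :
    ∀ α ∈ Set.Icc (0 : ℝ) 1,
      0 < deriv (fun a : ℝ => u₁ t x a) α ∧ deriv (fun a : ℝ => u₂ t x a) α < 0 := by
  intro α hα
  have hct₁ : 0 < 1 - c₁ α * t :=
    (hct α hα).trans_le (sub_le_sub_left (mul_le_mul_of_nonneg_right (hc α hα).2 ht.le) 1)
  simp only [hu₁, hu₂]
  rw [(hasDerivAt_endpoint (hc₁ α hα) (hγ₁ α hα) (hk₁ α hα)).deriv,
    (hasDerivAt_endpoint (hc₂ α hα) (hγ₂ α hα) (hk₂ α hα)).deriv]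
  exact ⟨mul_pos hlam (endpoint_rate_pos x ht hct₁),
    mul_neg_of_neg_of_pos (neg_neg_of_pos hlam) (endpoint_rate_pos x ht (hct α hα))⟩

/-- Strict monotonicity in `α` of the endpoint functions
`u₁(t,x,α) = c₁(α)x²exp(−γ₁(α)t) + k₁(α)t` (increasing) and
`u₂(t,x,α) = c₂(α)x²exp(−γ₂(α)t) + k₂(α)t` (decreasing)
of the candidate Seikkala solution, under the stated hypotheses on the
fuzzy parameters. -/
theorem stmt3 (lam : ℝ) (hlam : 0 < lam)
    (k₁ k₂ c₁ c₂ γ₁ γ₂ : ℝ → ℝ)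
    (hk₁ : ∀ α ∈ Set.Icc (0 : ℝ) 1, HasDerivAt k₁ lam α)
    (hc₁ : ∀ α ∈ Set.Icc (0 : ℝ) 1, HasDerivAt c₁ lam α)
    (hγ₁ : ∀ α ∈ Set.Icc (0 : ℝ) 1, HasDerivAt γ₁ lam α)
    (hk₂ : ∀ α ∈ Set.Icc (0 : ℝ) 1, HasDerivAt k₂ (-lam) α)
    (hc₂ : ∀ α ∈ Set.Icc (0 : ℝ) 1, HasDerivAt c₂ (-lam) α)
    (hγ₂ : ∀ α ∈ Set.Icc (0 : ℝ) 1, HasDerivAt γ₂ (-lam) α)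
    (u₁ u₂ : ℝ → ℝ → ℝ → ℝ)
    (hu₁ : ∀ t x α : ℝ, u₁ t x α = c₁ α * x ^ 2 * Real.exp (-γ₁ α * t) + k₁ α * t)
    (hu₂ : ∀ t x α : ℝ, u₂ t x α = c₂ α * x ^ 2 * Real.exp (-γ₂ α * t) + k₂ α * t)
    (t x : ℝ) (ht : 0 < t) (hx : 0 < x)
    (hc : ∀ α ∈ Set.Icc (0 : ℝ) 1, 0 < c₁ α ∧ c₁ α ≤ c₂ α)
    (hct : ∀ α ∈ Set.Icc (0 : ℝ) 1, 0 < 1 - c₂ α * t) :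
    ∀ α ∈ Set.Icc (0 : ℝ) 1,
      0 < deriv (fun a : ℝ => u₁ t x a) α ∧ deriv (fun a : ℝ => u₂ t x a) α < 0 :=
  stmt3_general lam hlam k₁ k₂ c₁ c₂ γ₁ γ₂ hk₁ hc₁ hγ₁ hk₂ hc₂ hγ₂ u₁ u₂ hu₁ hu₂ t x ht hc hct
end

section
/- Let γ₁, γ₂, k₁, k₂, c₁, c₂ be real numbers. Define u₁(t,x) = (γ₁/12)·k₂·t⁴ − (γ₁/6)·k₂·x·t⁴ − (1/3)·k₂·x²·t³ + c₁·x² + 2·γ₁·c₁·x·t − γ₁·c₁·t and u₂(t,x) = (γ₂/12)·k₁·t⁴ − (γ₂/6)·k₁·x·t⁴ − (1/3)·k₁·x²·t³ + c₂·x² + 2·γ₂·c₂·x·t − γ₂·c₂·t. Then for all t,x ∈ ℝ: ∂u₁/∂t(t,x) + γ₁·(1/2 − x)·∂²u₁/∂x²(t,x) = −k₂·x²·t², ∂u₂/∂t(t,x) + γ₂·(1/2 − x)·∂²u₂/∂x²(t,x) = −k₁·x²·t², and u₁(0,x) = c₁·x², u₂(0,x) = c₂·x². -/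
/-! Both endpoint functions are the same polynomial in `(t, x)` with parameters `(γ, k, c)`,
so it suffices to differentiate that polynomial term by term: in `∂ₜu + γ(1/2 − x)∂ₓ²u`
every term except `−kx²t²` cancels, and at `t = 0` only `cx²` survives. -/

noncomputable def heatLikeSolution (γ k c : ℝ) (p : ℝ × ℝ) : ℝ :=
  (γ / 12) * k * p.1 ^ 4 - (γ / 6) * k * p.2 * p.1 ^ 4 - (1 / 3) * k * p.2 ^ 2 * p.1 ^ 3
    + c * p.2 ^ 2 + 2 * γ * c * p.2 * p.1 - γ * c * p.1

namespace heatLikeSolution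

variable (γ k c : ℝ)

lemma deriv_time (t x : ℝ) :
    deriv (fun s => heatLikeSolution γ k c (s, x)) t
      = γ / 3 * k * t ^ 3 - 2 * γ / 3 * k * x * t ^ 3 - k * x ^ 2 * t ^ 2
        + 2 * γ * c * x - γ * c := by
  simp (disch := fun_prop) [heatLikeSolution]
  ring

lemma deriv_space (t : ℝ) :
    deriv (fun z => heatLikeSolution γ k c (t, z))
      = fun z => -(γ / 6) * k * t ^ 4 - 2 / 3 * k * z * t ^ 3 + 2 * c * z + 2 * γ * c * t := by
  funext z
  simp (disch := fun_prop) [heatLikeSolution]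
  ring

lemma deriv_deriv_space (t x : ℝ) :
    deriv (deriv fun z => heatLikeSolution γ k c (t, z)) x = 2 * c - 2 / 3 * k * t ^ 3 := by
  rw [deriv_space]
  simp (disch := fun_prop)
  ring

theorem heatLike_equation (t x : ℝ) :
    deriv (fun s => heatLikeSolution γ k c (s, x)) t
      + γ * (1 / 2 - x) * deriv (deriv fun z => heatLikeSolution γ k c (t, z)) x
      = -k * x ^ 2 * t ^ 2 := by
  rw [deriv_time, deriv_deriv_space]
  ring

theorem initial_value (x : ℝ) : heatLikeSolution γ k c (0, x) = c * x ^ 2 := by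
  simp [heatLikeSolution]

end heatLikeSolution

/-- The endpoint functions `u₁`, `u₂` of the Seikkala solution of the fuzzified
heat-like model `U_t + γ(1/2 − x)U_xx = −kx²t²` satisfy the coupled system and
the initial conditions. -/
theorem stmt9 (γ₁ γ₂ k₁ k₂ c₁ c₂ : ℝ) (u₁ u₂ : ℝ × ℝ → ℝ)
    (hu₁ : ∀ t x : ℝ,
      u₁ (t, x) = (γ₁ / 12) * k₂ * t ^ 4 - (γ₁ / 6) * k₂ * x * t ^ 4
        - (1 / 3) * k₂ * x ^ 2 * t ^ 3 + c₁ * x ^ 2 + 2 * γ₁ * c₁ * x * t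
        - γ₁ * c₁ * t)
    (hu₂ : ∀ t x : ℝ,
      u₂ (t, x) = (γ₂ / 12) * k₁ * t ^ 4 - (γ₂ / 6) * k₁ * x * t ^ 4
        - (1 / 3) * k₁ * x ^ 2 * t ^ 3 + c₂ * x ^ 2 + 2 * γ₂ * c₂ * x * t
        - γ₂ * c₂ * t) :
    (∀ t x : ℝ,
      deriv (fun s : ℝ => u₁ (s, x)) t
        + γ₁ * (1 / 2 - x) * deriv (deriv (fun z : ℝ => u₁ (t, z))) x
      = -k₂ * x ^ 2 * t ^ 2)
    ∧ (∀ t x : ℝ,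
      deriv (fun s : ℝ => u₂ (s, x)) t
        + γ₂ * (1 / 2 - x) * deriv (deriv (fun z : ℝ => u₂ (t, z))) x
      = -k₁ * x ^ 2 * t ^ 2)
    ∧ (∀ x : ℝ, u₁ (0, x) = c₁ * x ^ 2)
    ∧ (∀ x : ℝ, u₂ (0, x) = c₂ * x ^ 2) := by
  obtain rfl : u₁ = heatLikeSolution γ₁ k₂ c₁ := funext fun p => hu₁ p.1 p.2
  obtain rfl : u₂ = heatLikeSolution γ₂ k₁ c₂ := funext fun p => hu₂ p.1 p.2
  exact ⟨heatLikeSolution.heatLike_equation _ _ _, heatLikeSolution.heatLike_equation _ _ _,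
    heatLikeSolution.initial_value _ _ _, heatLikeSolution.initial_value _ _ _⟩
end

section
/- Let γ ≠ 0 and k, c be real numbers. Define U₀(t,x) = c·sin(x) and recursively U_{n+1}(t,x) = U_n(t,x) − ∫₀ᵗ ( ∂U_n/∂s(s,x) − γ·∂²U_n/∂x²(s,x) + k·cos(x) ) ds. Then for every n ≥ 1 and all t,x ∈ ℝ, U_n(t,x) = c·sin(x)·( Σ_{j=0}^{n} (−γ·t)^j / j! ) + (k/γ)·cos(x)·( Σ_{j=1}^{n} (−γ·t)^j / j! ), and consequently lim_{n→∞} U_n(t,x) = c·sin(x)·exp(−γ·t) + (k/γ)·cos(x)·(exp(−γ·t) − 1). -/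
/-!
Every iterate separates as `U n t x = A x * E n t - (k / γ) * cos x` with `A x = c sin x + (k / γ) cos x`
and `E n t` the Taylor polynomial of degree `n` of `exp (-γ t)`. Since `A'' = -A`, the operator
`∂ₜ - γ ∂ₓₓ` applied to this ansatz produces `A x * (∂ₜ E n + γ E n) - k cos x`, so the source term
cancels and the correction step only acts on `E n`; there `∂ₜ E n + γ E n` is the single monomial
`γ (-γ s) ^ n / n!`, whose integral is the next Taylor term.
-/

open Filter intervalIntegral

open Finset Real

noncomputable def expTaylor (n : ℕ) (x : ℝ) : ℝ :=
  ∑ j ∈ range n, x ^ j / j.factorial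

theorem expTaylor_succ (n : ℕ) (x : ℝ) :
    expTaylor (n + 1) x = expTaylor n x + x ^ n / n.factorial :=
  sum_range_succ _ _

theorem continuous_expTaylor (n : ℕ) : Continuous (expTaylor n) := by
  unfold expTaylor
  fun_prop

theorem hasDerivAt_expTaylor_succ (n : ℕ) (x : ℝ) :
    HasDerivAt (expTaylor (n + 1)) (expTaylor n x) x := by
  induction n with
  | zero =>
    have h1 : expTaylor 1 = fun _ => 1 := by ext; simp [expTaylor]
    rw [zero_add, h1]
    simpa [expTaylor] using hasDerivAt_const x (1 : ℝ)
  | succ n ih =>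
    have hterm : HasDerivAt (fun y : ℝ => y ^ (n + 1) / (n + 1).factorial)
        (x ^ n / n.factorial) x := by
      refine ((hasDerivAt_pow (n + 1) x).div_const ((n + 1).factorial : ℝ)).congr_deriv ?_
      push_cast [Nat.factorial_succ, Nat.add_sub_cancel]
      field_simp
    rw [funext (expTaylor_succ (n + 1)), expTaylor_succ]
    exact ih.add hterm

theorem hasDerivAt_expTaylor_succ_mul (n : ℕ) (a s : ℝ) :
    HasDerivAt (fun s => expTaylor (n + 1) (a * s)) (a * expTaylor n (a * s)) s :=
  ((hasDerivAt_expTaylor_succ n (a * s)).comp s ((hasDerivAt_id' s).const_mul a)).congr_deriv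
    (by ring)

theorem tendsto_expTaylor (x : ℝ) : Tendsto (expTaylor · x) atTop (nhds (exp x)) := by
  rw [exp_eq_exp_ℝ]
  exact (NormedSpace.expSeries_div_hasSum_exp x).tendsto_sum_nat

theorem sum_Icc_one_eq_expTaylor_sub_one (n : ℕ) (x : ℝ) :
    ∑ j ∈ Icc 1 n, x ^ j / j.factorial = expTaylor (n + 1) x - 1 := by
  rw [← Ico_add_one_right_eq_Icc, sum_Ico_eq_sub _ (by omega)]
  simp [expTaylor]

/-- The time part of one correction step with `λ = -1`, for `E n t = expTaylor (n + 1) (a * t)`. -/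
theorem integral_sub_expTaylor (n : ℕ) (a t : ℝ) :
    ∫ s in (0 : ℝ)..t, (a * expTaylor n (a * s) - a * expTaylor (n + 1) (a * s)) =
      expTaylor (n + 1) (a * t) - expTaylor (n + 2) (a * t) := by
  have hderiv (s : ℝ) :
      HasDerivAt (fun s => expTaylor (n + 1) (a * s) - expTaylor (n + 2) (a * s))
        (a * expTaylor n (a * s) - a * expTaylor (n + 1) (a * s)) s :=
    (hasDerivAt_expTaylor_succ_mul n a s).sub (hasDerivAt_expTaylor_succ_mul (n + 1) a s)
  have hcont : Continuous fun s => a * expTaylor n (a * s) - a * expTaylor (n + 1) (a * s) := by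
    have := continuous_expTaylor n
    have := continuous_expTaylor (n + 1)
    fun_prop
  rw [integral_eq_sub_of_hasDerivAt (fun s _ => hderiv s) (hcont.intervalIntegrable _ _)]
  simp [expTaylor_succ (n + 1)]

theorem deriv_deriv_mul_sin_add_mul_cos (p q : ℝ) :
    deriv (deriv fun z => p * sin z + q * cos z) = fun z => -(p * sin z + q * cos z) := by
  have h1 : deriv (fun z => p * sin z + q * cos z) = fun z => p * cos z - q * sin z :=
    funext fun z =>
      (((hasDerivAt_sin z).const_mul p).add ((hasDerivAt_cos z).const_mul q)).deriv.trans
        (by ring)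
  rw [h1]
  exact funext fun z =>
    (((hasDerivAt_cos z).const_mul p).sub ((hasDerivAt_sin z).const_mul q)).deriv.trans (by ring)

theorem vim_iterate_eq_expTaylor (γ k c : ℝ) (hγ : γ ≠ 0) (U : ℕ → ℝ → ℝ → ℝ)
    (h0 : ∀ t x : ℝ, U 0 t x = c * sin x)
    (hrec : ∀ n : ℕ, ∀ t x : ℝ,
      U (n + 1) t x = U n t x -
        ∫ s in (0 : ℝ)..t,
          (deriv (fun s' : ℝ => U n s' x) s
            - γ * deriv (deriv (fun z : ℝ => U n s z)) x
            + k * cos x))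
    (n : ℕ) (t x : ℝ) :
    U n t x = c * sin x * expTaylor (n + 1) (-γ * t)
      + k / γ * cos x * (expTaylor (n + 1) (-γ * t) - 1) := by
  induction n generalizing t x with
  | zero => simp [h0, expTaylor]
  | succ n ih =>
    have hdt (s : ℝ) : deriv (fun s' => U n s' x) s
        = (c * sin x + k / γ * cos x) * (-γ * expTaylor n (-γ * s)) := by
      have hE := hasDerivAt_expTaylor_succ_mul n (-γ) s
      simp only [ih]
      exact HasDerivAt.deriv <|
        ((hE.const_mul _).add ((hE.sub_const 1).const_mul _)).congr_deriv (by ring)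
    have hdxx (s : ℝ) : deriv (deriv fun z => U n s z) x
        = -(c * sin x * expTaylor (n + 1) (-γ * s)
            + k / γ * cos x * (expTaylor (n + 1) (-γ * s) - 1)) := by
      have hU : (fun z => U n s z) = fun z => c * expTaylor (n + 1) (-γ * s) * sin z
          + k / γ * (expTaylor (n + 1) (-γ * s) - 1) * cos z := by
        ext z
        rw [ih]
        ring
      rw [hU, deriv_deriv_mul_sin_add_mul_cos]
      ring
    have hintegrand : (fun s => deriv (fun s' => U n s' x) s
        - γ * deriv (deriv fun z => U n s z) x + k * cos x)
        = fun s => (c * sin x + k / γ * cos x) *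
            (-γ * expTaylor n (-γ * s) - -γ * expTaylor (n + 1) (-γ * s)) := by
      ext s
      rw [hdt, hdxx]
      field_simp
      ring
    rw [hrec, hintegrand, integral_const_mul, integral_sub_expTaylor, ih]
    ring

/-- Closed form and limit of the VIM iterates for the one-dimensional heat-like
model `U_t − γU_xx = −k cos x` with initial approximation `U₀(t,x) = c sin x`,
where `γ ≠ 0`. -/
theorem stmt12 (γ k c : ℝ) (hγ : γ ≠ 0) (U : ℕ → ℝ → ℝ → ℝ)
    (h0 : ∀ t x : ℝ, U 0 t x = c * Real.sin x)
    (hrec : ∀ n : ℕ, ∀ t x : ℝ,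
      U (n + 1) t x = U n t x -
        ∫ s in (0 : ℝ)..t,
          (deriv (fun s' : ℝ => U n s' x) s
            - γ * deriv (deriv (fun z : ℝ => U n s z)) x
            + k * Real.cos x)) :
    (∀ n : ℕ, 1 ≤ n → ∀ t x : ℝ,
      U n t x =
        c * Real.sin x * (∑ j ∈ Finset.range (n + 1), (-γ * t) ^ j / (j.factorial : ℝ))
          + (k / γ) * Real.cos x *
            (∑ j ∈ Finset.Icc 1 n, (-γ * t) ^ j / (j.factorial : ℝ)))
    ∧ (∀ t x : ℝ,
      Tendsto (fun n : ℕ => U n t x) atTop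
        (nhds (c * Real.sin x * Real.exp (-γ * t)
          + (k / γ) * Real.cos x * (Real.exp (-γ * t) - 1)))) := by
  have hU := vim_iterate_eq_expTaylor γ k c hγ U h0 hrec
  refine ⟨fun n _ t x => ?_, fun t x => ?_⟩
  · rw [hU, sum_Icc_one_eq_expTaylor_sub_one]
    rfl
  · simp only [hU]
    have hE := (tendsto_expTaylor (-γ * t)).comp (tendsto_add_atTop_nat 1)
    exact (hE.const_mul _).add ((hE.sub_const 1).const_mul _)
end

section
/- Let γ₁, γ₂ > 0 and k₁, k₂, c₁, c₂ be real numbers, and set w = γ₁·γ₂. Define u₁(t,x) = c₁·sin(x)·cosh(√w·t) − (c₂·γ₂/√w)·sin(x)·sinh(√w·t) + (k₁/γ₁)·cos(x)·(cosh(√w·t) − 1) − (k₂/√w)·cos(x)·sinh(√w·t) and u₂(t,x) = c₂·sin(x)·cosh(√w·t) − (c₁·γ₁/√w)·sin(x)·sinh(√w·t) + (k₂/γ₂)·cos(x)·(cosh(√w·t) − 1) − (k₁/√w)·cos(x)·sinh(√w·t). Then for all t,x ∈ ℝ: ∂u₁/∂t(t,x) − γ₂·∂²u₂/∂x²(t,x)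 = −k₂·cos(x), ∂u₂/∂t(t,x) − γ₁·∂²u₁/∂x²(t,x) = −k₁·cos(x), and u₁(0,x) = c₁·sin(x), u₂(0,x) = c₂·sin(x). -/
/-!
Both endpoints have the form `A(t) sin x + B(t) cos x`, and `∂ₓ²` acts on such a function as
multiplication by `-1`. The coupled system therefore reduces to a linear system of ODEs for the
coefficients, whose solutions are combinations of `cosh (a t)` and `sinh (a t)` with
`a² = γ₁γ₂`. The system is symmetric under exchanging the indices `1 ↔ 2`, so it suffices to
verify one of its two equations for a family of functions parametrised accordingly.
-/

open Real

/-- The endpoint with own parameters `γ, k, c` and partner parameters `γ', k', c'`; `a` stands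
for `√(γγ')`. -/
noncomputable def seikkalaEndpoint (a γ γ' k k' c c' : ℝ) (p : ℝ × ℝ) : ℝ :=
  c * sin p.2 * cosh (a * p.1) - (c' * γ' / a) * sin p.2 * sinh (a * p.1)
    + (k / γ) * cos p.2 * (cosh (a * p.1) - 1) - (k' / a) * cos p.2 * sinh (a * p.1)

theorem deriv_sin_add_cos (A B : ℝ) :
    deriv (fun z => A * sin z + B * cos z) = fun z => -B * sin z + A * cos z := by
  funext z
  exact (((hasDerivAt_sin z).const_mul A).add ((hasDerivAt_cos z).const_mul B)).deriv.trans
    (by ring)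

theorem deriv_deriv_sin_add_cos (A B x : ℝ) :
    deriv (deriv fun z => A * sin z + B * cos z) x = -(A * sin x + B * cos x) := by
  rw [deriv_sin_add_cos, deriv_sin_add_cos]
  ring

theorem seikkalaEndpoint_zero (a γ γ' k k' c c' x : ℝ) :
    seikkalaEndpoint a γ γ' k k' c c' (0, x) = c * sin x := by
  simp [seikkalaEndpoint]

theorem hasDerivAt_seikkalaEndpoint_time (a γ γ' k k' c c' t x : ℝ) :
    HasDerivAt (fun s => seikkalaEndpoint a γ γ' k k' c c' (s, x))
      ((c * sin x + k / γ * cos x) * a * sinh (a * t)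
        - (c' * γ' / a * sin x + k' / a * cos x) * a * cosh (a * t)) t := by
  have hlin : HasDerivAt (fun s => a * s) a t := by
    simpa using (hasDerivAt_id t).const_mul a
  have h := ((((hlin.cosh).const_mul (c * sin x)).sub
    ((hlin.sinh).const_mul (c' * γ' / a * sin x))).add
      (((hlin.cosh).sub_const 1).const_mul (k / γ * cos x))).sub
        ((hlin.sinh).const_mul (k' / a * cos x))
  exact h.congr_deriv (by ring)

theorem seikkalaEndpoint_space (a γ γ' k k' c c' t : ℝ) :
    (fun z => seikkalaEndpoint a γ γ' k k' c c' (t, z))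
      = fun z => (c * cosh (a * t) - c' * γ' / a * sinh (a * t)) * sin z
          + (k / γ * (cosh (a * t) - 1) - k' / a * sinh (a * t)) * cos z := by
  funext z
  simp only [seikkalaEndpoint]
  ring

theorem seikkalaEndpoint_coupled {a γ γ' : ℝ} (hγ : γ ≠ 0) (hγ' : γ' ≠ 0)
    (ha : a ^ 2 = γ * γ') (k k' c c' t x : ℝ) :
    deriv (fun s => seikkalaEndpoint a γ γ' k k' c c' (s, x)) t
        - γ' * deriv (deriv fun z => seikkalaEndpoint a γ' γ k' k c' c (t, z)) x
      = -k' * cos x := by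
  have ha0 : a ≠ 0 := by
    rintro rfl
    exact mul_ne_zero hγ hγ' (by simpa using ha.symm)
  rw [(hasDerivAt_seikkalaEndpoint_time a γ γ' k k' c c' t x).deriv, seikkalaEndpoint_space,
    deriv_deriv_sin_add_cos]
  field_simp
  linear_combination (c * sin x * γ + k * cos x) * sinh (a * t) * ha

/-- The candidate endpoint functions `u₁`, `u₂` of the Seikkala solution of the
fuzzified heat-like model `U_t − γU_xx = −k cos x` (coefficient `P(x,γ) = −γ < 0`)
satisfy the coupled system and the initial conditions, where `w = γ₁γ₂`. -/
theorem stmt13 (γ₁ γ₂ k₁ k₂ c₁ c₂ : ℝ) (hγ₁ : 0 < γ₁) (hγ₂ : 0 < γ₂)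
    (w : ℝ) (hw : w = γ₁ * γ₂) (u₁ u₂ : ℝ × ℝ → ℝ)
    (hu₁ : ∀ t x : ℝ,
      u₁ (t, x) = c₁ * Real.sin x * Real.cosh (Real.sqrt w * t)
        - (c₂ * γ₂ / Real.sqrt w) * Real.sin x * Real.sinh (Real.sqrt w * t)
        + (k₁ / γ₁) * Real.cos x * (Real.cosh (Real.sqrt w * t) - 1)
        - (k₂ / Real.sqrt w) * Real.cos x * Real.sinh (Real.sqrt w * t))
    (hu₂ : ∀ t x : ℝ,
      u₂ (t, x) = c₂ * Real.sin x * Real.cosh (Real.sqrt w * t)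
        - (c₁ * γ₁ / Real.sqrt w) * Real.sin x * Real.sinh (Real.sqrt w * t)
        + (k₂ / γ₂) * Real.cos x * (Real.cosh (Real.sqrt w * t) - 1)
        - (k₁ / Real.sqrt w) * Real.cos x * Real.sinh (Real.sqrt w * t)) :
    (∀ t x : ℝ,
      deriv (fun s : ℝ => u₁ (s, x)) t
        - γ₂ * deriv (deriv (fun z : ℝ => u₂ (t, z))) x
      = -k₂ * Real.cos x)
    ∧ (∀ t x : ℝ,
      deriv (fun s : ℝ => u₂ (s, x)) t
        - γ₁ * deriv (deriv (fun z : ℝ => u₁ (t, z))) x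
      = -k₁ * Real.cos x)
    ∧ (∀ x : ℝ, u₁ (0, x) = c₁ * Real.sin x)
    ∧ (∀ x : ℝ, u₂ (0, x) = c₂ * Real.sin x) := by
  have hsq : √w ^ 2 = γ₁ * γ₂ := by
    rw [sq_sqrt (hw ▸ (mul_pos hγ₁ hγ₂).le), hw]
  obtain rfl : u₁ = seikkalaEndpoint √w γ₁ γ₂ k₁ k₂ c₁ c₂ := funext fun p => hu₁ p.1 p.2
  obtain rfl : u₂ = seikkalaEndpoint √w γ₂ γ₁ k₂ k₁ c₂ c₁ := funext fun p => hu₂ p.1 p.2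
  exact ⟨seikkalaEndpoint_coupled hγ₁.ne' hγ₂.ne' hsq k₁ k₂ c₁ c₂,
    seikkalaEndpoint_coupled hγ₂.ne' hγ₁.ne' (hsq.trans (mul_comm _ _)) k₂ k₁ c₂ c₁,
    seikkalaEndpoint_zero _ _ _ _ _ _ _, seikkalaEndpoint_zero _ _ _ _ _ _ _⟩
end

section
/- Let 0 < γ₁ ≤ γ₂, w = γ₁·γ₂, 0 ≤ c₁ ≤ c₂, and k₁ ≤ k₂ ≤ 0 be real numbers, and let x ∈ (0, π/2). Define A₁(x) = (c₁ − c₂·γ₂/√w)·sin(x) + (k₁/γ₁ − k₂/√w)·cos(x) and A₂(x) = (c₂ − c₁·γ₁/√w)·sin(x) + (k₂/γ₂ − k₁/√w)·cos(x). Then A₁(x) ≤ A₂(x). -/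
open Real

/-!
Both coefficient gaps are nonnegative: `c₁γ₁ ≤ c₂γ₂` because all factors are nonnegative, and
`k₁/γ₁ ≤ k₂/γ₂` because the `k`'s are nonpositive, and dividing by `√w ≥ 0` keeps the order.
On `(0, π/2)` both `sin` and `cos` are nonnegative, so the larger coefficients give the larger
combination.
-/

lemma mul_sin_add_mul_cos_le_of_le {a a' b b' x : ℝ} (ha : a ≤ a') (hb : b ≤ b')
    (hx0 : 0 ≤ x) (hx1 : x ≤ π / 2) :
    a * sin x + b * cos x ≤ a' * sin x + b' * cos x := by
  have hsin : 0 ≤ sin x := sin_nonneg_of_nonneg_of_le_pi hx0 (by linarith [pi_pos])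
  have hcos : 0 ≤ cos x := cos_nonneg_of_mem_Icc ⟨by linarith [pi_pos], hx1⟩
  gcongr

lemma sub_div_le_sub_div_of_le {a a' b b' s : ℝ} (ha : a ≤ a') (hb : b ≤ b') (hs : 0 ≤ s) :
    a - b' / s ≤ a' - b / s :=
  sub_le_sub ha (div_le_div_of_nonneg_right hb hs)

lemma div_le_div_of_le_of_nonpos {k₁ k₂ γ₁ γ₂ : ℝ} (hk : k₁ ≤ k₂) (hk₂ : k₂ ≤ 0)
    (hγ₁ : 0 < γ₁) (hγ : γ₁ ≤ γ₂) : k₁ / γ₁ ≤ k₂ / γ₂ := by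
  have hk₂γ : k₂ / γ₁ ≤ k₂ / γ₂ := by
    rw [← neg_le_neg_iff, ← neg_div, ← neg_div]
    exact div_le_div_of_nonneg_left (neg_nonneg.mpr hk₂) hγ₁ hγ
  exact (div_le_div_of_nonneg_right hk hγ₁.le).trans hk₂γ

theorem stmt14_general (γ₁ γ₂ k₁ k₂ c₁ c₂ w : ℝ)
    (hγ₁ : 0 < γ₁) (hγ : γ₁ ≤ γ₂)
    (hc₁ : 0 ≤ c₁) (hc : c₁ ≤ c₂)
    (hk : k₁ ≤ k₂) (hk₂ : k₂ ≤ 0)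
    (x : ℝ) (hx0 : 0 < x) (hx1 : x < Real.pi / 2)
    (A₁ A₂ : ℝ → ℝ)
    (hA₁ : ∀ z : ℝ, A₁ z = (c₁ - c₂ * γ₂ / Real.sqrt w) * Real.sin z
      + (k₁ / γ₁ - k₂ / Real.sqrt w) * Real.cos z)
    (hA₂ : ∀ z : ℝ, A₂ z = (c₂ - c₁ * γ₁ / Real.sqrt w) * Real.sin z
      + (k₂ / γ₂ - k₁ / Real.sqrt w) * Real.cos z) :
    A₁ x ≤ A₂ x := by
  rw [hA₁, hA₂]
  have hcγ : c₁ * γ₁ ≤ c₂ * γ₂ := mul_le_mul hc hγ hγ₁.le (hc₁.trans hc)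
  have hkγ : k₁ / γ₁ ≤ k₂ / γ₂ := div_le_div_of_le_of_nonpos hk hk₂ hγ₁ hγ
  exact mul_sin_add_mul_cos_le_of_le (sub_div_le_sub_div_of_le hc hcγ (sqrt_nonneg w))
    (sub_div_le_sub_div_of_le hkγ hk (sqrt_nonneg w)) hx0.le hx1.le

/-- The asymptotic amplitude coefficients satisfy `A₁(x) ≤ A₂(x)` for
`x ∈ (0, π/2)`, where `0 < γ₁ ≤ γ₂`, `w = γ₁γ₂`, `0 ≤ c₁ ≤ c₂`, `k₁ ≤ k₂ ≤ 0`. -/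
theorem stmt14 (γ₁ γ₂ k₁ k₂ c₁ c₂ w : ℝ)
    (hγ₁ : 0 < γ₁) (hγ : γ₁ ≤ γ₂) (hw : w = γ₁ * γ₂)
    (hc₁ : 0 ≤ c₁) (hc : c₁ ≤ c₂)
    (hk : k₁ ≤ k₂) (hk₂ : k₂ ≤ 0)
    (x : ℝ) (hx0 : 0 < x) (hx1 : x < Real.pi / 2)
    (A₁ A₂ : ℝ → ℝ)
    (hA₁ : ∀ z : ℝ, A₁ z = (c₁ - c₂ * γ₂ / Real.sqrt w) * Real.sin z
      + (k₁ / γ₁ - k₂ / Real.sqrt w) * Real.cos z)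
    (hA₂ : ∀ z : ℝ, A₂ z = (c₂ - c₁ * γ₁ / Real.sqrt w) * Real.sin z
      + (k₂ / γ₂ - k₁ / Real.sqrt w) * Real.cos z) :
    A₁ x ≤ A₂ x :=
  stmt14_general γ₁ γ₂ k₁ k₂ c₁ c₂ w hγ₁ hγ hc₁ hc hk hk₂ x hx0 hx1 A₁ A₂ hA₁ hA₂
end
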